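/- Let C be a triangulated category with both a bounded non-degenerate t-structure and a weight structure, such that every object of the heart of the t-structure which is pure of a single weight is semisimple, and such that for every object F pure of weight 0 the n-th perverse cohomology object ^pH^n(F) is pure of weight -n. Then every pure object F of weight 0 is isomorphic to the direct sum of its shifted t-cohomology objects ⊕_n (^pH^n F)[-n]. -/

import Mathlib

/-!
Split the Postnikov tower `0 = Y (a - 1) → Y a → ⋯ → Y b ≅ F` one triangle at a time. Its graded
pieces `(pH n F)⟦-n⟧` are pure of weight `-2n`, so if `Y n ≅ ⨁_{a ≤ m ≤ n} (pH m F)⟦-m⟧`, the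
connecting map `(pH (n+1) F)⟦-(n+1)⟧ ⟶ (Y n)⟦1⟧` goes from weight `-2n-2` into a sum of objects of
weights `≥ -2n+1` and vanishes by orthogonality. A distinguished triangle with zero connecting map
splits, which gives the same description of `Y (n + 1)`.
-/

open CategoryTheory Limits Pretriangulated

/-- A weight structure on a triangulated category, following Bondarko:
a pair of full subcategories (given by predicates on objects) `le0 = C_{w≤0}` and
`ge0 = C_{w≥0}`, closed under direct summands, with the shift-monotonicity conditions
`C_{w≤0} ⊆ C_{w≤0}[1]` and `C_{w≥0}[1] ⊆ C_{w≥0}`, orthogonality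
`Hom(X, Y) = 0` for `X ∈ C_{w≤0}`, `Y ∈ C_{w≥0}[1]`, and weight decomposition triangles. -/
structure WeightStructure (C : Type*) [Category C] [Preadditive C] [HasZeroObject C]
    [HasShift C ℤ] [∀ n : ℤ, (CategoryTheory.shiftFunctor C n).Additive]
    [Pretriangulated C] where
  le0 : C → Prop
  ge0 : C → Prop
  le0_summand : ∀ ⦃X Y : C⦄ (i : X ⟶ Y) (r : Y ⟶ X), i ≫ r = 𝟙 X → le0 Y → le0 X
  ge0_summand : ∀ ⦃X Y : C⦄ (i : X ⟶ Y) (r : Y ⟶ X), i ≫ r = 𝟙 X → ge0 Y → ge0 X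
  le0_shift : ∀ ⦃X : C⦄, le0 X → le0 (X⟦(-1 : ℤ)⟧)
  ge0_shift : ∀ ⦃X : C⦄, ge0 X → ge0 (X⟦(1 : ℤ)⟧)
  orth : ∀ ⦃X Y : C⦄, le0 X → ge0 Y → ∀ f : X ⟶ Y⟦(1 : ℤ)⟧, f = 0
  decomp : ∀ X : C, ∃ (A B : C) (_ : le0 A) (_ : ge0 B)
    (f : A ⟶ X) (g : X ⟶ B⟦(1 : ℤ)⟧) (h : B⟦(1 : ℤ)⟧ ⟶ A⟦(1 : ℤ)⟧),
    Triangle.mk f g h ∈ distTriang C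


/-- The class `C_{w=p}` of objects pure of weight `p` for a weight structure:
`C_{w≤p} ∩ C_{w≥p}` with `C_{w≤p} = C_{w≤0}[p]` and `C_{w≥p} = C_{w≥0}[p]`. -/
def WeightStructure.pure {C : Type*} [Category C] [Preadditive C] [HasZeroObject C]
    [HasShift C ℤ] [∀ n : ℤ, (CategoryTheory.shiftFunctor C n).Additive]
    [Pretriangulated C] (w : WeightStructure C) (p : ℤ) (X : C) : Prop :=
  w.le0 (X⟦(-p)⟧) ∧ w.ge0 (X⟦(-p)⟧)

namespace CategoryTheory

lemma Functor.hom_obj_biproduct_eq_zero {D E : Type*} [Category D] [Preadditive D] [Category E]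
    [Preadditive E] (F : D ⥤ E) [F.Additive] {J : Type} [Finite J] (f : J → D)
    [HasBiproduct f] {X : E} (h : ∀ (j : J) (g : X ⟶ F.obj (f j)), g = 0)
    (g : X ⟶ F.obj (⨁ f)) : g = 0 := by
  rw [← Preadditive.IsIso.comp_right_eq_zero g (F.mapBiproduct f).hom]
  ext j
  simp [h j]

namespace Limits

variable {D : Type*} [Category D] [Preadditive D]

lemma isZero_biproduct_of_isEmpty {J : Type*} [IsEmpty J] (f : J → D) [HasBiproduct f] :
    IsZero (⨁ f) := by
  rw [IsZero.iff_id_eq_zero]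
  ext j
  exact isEmptyElim j

variable [HasFiniteBiproducts D]

lemma biproduct.ι_π_some {J : Type} [Finite J] (f : Option J → D) (j k : J) :
    biproduct.ι f (some j) ≫ biproduct.π f (some k) =
      biproduct.ι (fun j => f (some j)) j ≫ biproduct.π (fun j => f (some j)) k := by
  by_cases h : j = k
  · subst h
    simp
  · simp [h]

variable [HasBinaryBiproducts D]

noncomputable def biproductOptionIso {J : Type} [Fintype J] (f : Option J → D) :
    ⨁ f ≅ f none ⊞ ⨁ fun j => f (some j) where
  hom := biprod.lift (biproduct.π f none) (biproduct.lift fun j => biproduct.π f (some j))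
  inv := biprod.desc (biproduct.ι f none) (biproduct.desc fun j => biproduct.ι f (some j))
  hom_inv_id := by
    rw [biprod.lift_desc, biproduct.lift_desc, ← biproduct.total,
      Fintype.sum_option (fun o => biproduct.π f o ≫ biproduct.ι f o)]
  inv_hom_id := by
    ext <;> simp [biproduct.ι_π_some]

noncomputable def biproductInsertIso {ι : Type} [DecidableEq ι] (f : ι → D) {s : Finset ι}
    {x : ι} (hx : x ∉ s) :
    (⨁ fun i : ↥(insert x s) => f i) ≅ f x ⊞ ⨁ fun i : ↥s => f i :=
  let e := Finset.subtypeInsertEquivOption hx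
  biproduct.whiskerEquiv e (fun i => eqToIso (by rw [e.symm_apply_apply])) ≪≫
    biproductOptionIso (fun o => f (e.symm o))

end Limits

end CategoryTheory

namespace WeightStructure

variable {C : Type*} [Category C] [Preadditive C] [HasZeroObject C] [HasShift C ℤ]
  [∀ n : ℤ, (CategoryTheory.shiftFunctor C n).Additive] [Pretriangulated C]
  (w : WeightStructure C)

/-- Weight `≤ p`, normalised so that `w.pure p X` is `w.le p X ∧ w.ge p X` by definition. -/
def le (p : ℤ) (X : C) : Prop := w.le0 (X⟦-p⟧)

def ge (p : ℤ) (X : C) : Prop := w.ge0 (X⟦-p⟧)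

variable {w}

lemma le0_of_iso {X Y : C} (e : X ≅ Y) (h : w.le0 X) : w.le0 Y :=
  w.le0_summand e.inv e.hom e.inv_hom_id h

lemma ge0_of_iso {X Y : C} (e : X ≅ Y) (h : w.ge0 X) : w.ge0 Y :=
  w.ge0_summand e.inv e.hom e.inv_hom_id h

lemma le_shift {p : ℤ} {X : C} (h : w.le p X) (a : ℤ) : w.le (p + a) (X⟦a⟧) :=
  le0_of_iso ((shiftFunctorAdd' C a (-(p + a)) (-p) (by lia)).app X) h

lemma ge_shift {p : ℤ} {X : C} (h : w.ge p X) (a : ℤ) : w.ge (p + a) (X⟦a⟧) :=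
  ge0_of_iso ((shiftFunctorAdd' C a (-(p + a)) (-p) (by lia)).app X) h

variable (w) in
lemma ge_antitone : Antitone w.ge := by
  intro p q hpq X hX
  induction p, hpq using Int.leInductionDown with
  | base => exact hX
  | pred n _ hn =>
    exact ge0_of_iso ((shiftFunctorAdd' C (-n) 1 (-(n - 1)) (by lia)).app X).symm
      (w.ge0_shift hn)

lemma zero_of_le_of_ge {p q : ℤ} {X Y : C} (hX : w.le p X) (hY : w.ge q Y) (hpq : p < q)
    (f : X ⟶ Y) : f = 0 := by
  let e := (shiftFunctorAdd' C (-(p + 1)) 1 (-p) (by lia)).app Y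
  have hf : (shiftFunctor C (-p)).map f ≫ e.hom = 0 :=
    w.orth hX (w.ge_antitone (by lia : p + 1 ≤ q) Y hY) _
  apply (shiftFunctor C (-p)).map_injective
  rwa [Functor.map_zero, ← Preadditive.IsIso.comp_right_eq_zero _ e.hom]

end WeightStructure

section PostnikovTower

variable {C : Type*} [Category C] [Preadditive C] [HasZeroObject C] [HasShift C ℤ]
  [∀ n : ℤ, (CategoryTheory.shiftFunctor C n).Additive] [Pretriangulated C]
  [HasFiniteBiproducts C]

lemma nonempty_iso_biproduct_of_postnikov_tower {Y Q : ℤ → C} {a : ℤ}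
    (hY : IsZero (Y (a - 1)))
    (htri : ∀ n : ℤ, ∃ (f : Y (n - 1) ⟶ Y n) (g : Y n ⟶ Q n)
      (h : Q n ⟶ (Y (n - 1))⟦(1 : ℤ)⟧), Triangle.mk f g h ∈ distTriang C)
    (horth : ∀ m n : ℤ, m < n → ∀ g : Q n ⟶ (Q m)⟦(1 : ℤ)⟧, g = 0) :
    ∀ n : ℤ, a - 1 ≤ n → Nonempty (Y n ≅ ⨁ fun m : ↥(Finset.Icc a n) => Q m) := by
  refine Int.leInduction ?_ ?_
  · have : IsEmpty ↥(Finset.Icc a (a - 1)) :=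
      ⟨fun m => by have := Finset.mem_Icc.1 m.2; lia⟩
    exact ⟨hY.iso (isZero_biproduct_of_isEmpty _)⟩
  · rintro n hn ⟨e⟩
    obtain ⟨f, g, h, hT⟩ : ∃ (f : Y n ⟶ Y (n + 1)) (g : Y (n + 1) ⟶ Q (n + 1))
        (h : Q (n + 1) ⟶ (Y n)⟦(1 : ℤ)⟧), Triangle.mk f g h ∈ distTriang C := by
      have := htri (n + 1)
      rwa [add_sub_cancel_right] at this
    have hlt : ∀ m : ↥(Finset.Icc a n), (m : ℤ) < n + 1 := fun m => by
      have := (Finset.mem_Icc.1 m.2).2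
      lia
    have hh : h = 0 := by
      rw [← Preadditive.IsIso.comp_right_eq_zero h ((shiftFunctor C (1 : ℤ)).map e.hom)]
      exact (shiftFunctor C (1 : ℤ)).hom_obj_biproduct_eq_zero
        (fun m : ↥(Finset.Icc a n) => Q m) (fun m => horth m (n + 1) (hlt m)) _
    obtain ⟨e', -⟩ := exists_iso_binaryBiproduct_of_distTriang _ hT hh
    rw [← Finset.insert_Icc_right_eq_Icc_add_one (by lia)]
    exact ⟨e' ≪≫ biprod.mapIso e (Iso.refl _) ≪≫ biprod.braiding _ _ ≪≫
      (biproductInsertIso Q (by simp)).symm⟩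

end PostnikovTower

/-- Let `C` be a triangulated category with a bounded non-degenerate t-structure `t`
(with cohomology objects `pH n X`, related to `X` by finite Postnikov towers) and a
weight structure `w`, such that pure objects of the heart are semisimple and such that
for every `F` pure of weight `0` the perverse cohomology `pH n F` is pure of weight
`-n`.  Then every object `F` pure of weight `0` is isomorphic to the direct sum of its
shifted t-cohomology objects `⊕ₙ (pH n F)[-n]`. -/
theorem pure_object_is_direct_sum_of_perverse_cohomologies
    {C : Type*} [Category C] [Preadditive C] [HasZeroObject C] [HasShift C ℤ]
    [∀ n : ℤ, (CategoryTheory.shiftFunctor C n).Additive] [Pretriangulated C]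
    [HasFiniteBiproducts C]
    (t : Triangulated.TStructure C) (w : WeightStructure C)
    (pH : ℤ → C → C)
    (hheart : ∀ (n : ℤ) (X : C), t.le 0 (pH n X) ∧ t.ge 0 (pH n X))
    (htower : ∀ X : C, ∃ (a b : ℤ) (Y : ℤ → C),
      (∀ n : ℤ, n < a → IsZero (Y n)) ∧ (∀ n : ℤ, b ≤ n → Nonempty (Y n ≅ X)) ∧
      ∀ n : ℤ, ∃ (f : Y (n - 1) ⟶ Y n) (g : Y n ⟶ (pH n X)⟦(-n)⟧)
        (h : (pH n X)⟦(-n)⟧ ⟶ (Y (n - 1))⟦(1 : ℤ)⟧),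
        Triangle.mk f g h ∈ distTriang C)
    (hnondeg : ∀ X : C, (∀ n : ℤ, IsZero (pH n X)) → IsZero X)
    (hsemi : ∀ (M : C) (p : ℤ), (t.le 0 M ∧ t.ge 0 M) → w.pure p M →
      ∀ (N : C) (f : N ⟶ M), (t.le 0 N ∧ t.ge 0 N) → Mono f →
        ∃ r : M ⟶ N, f ≫ r = 𝟙 N)
    (hpureH : ∀ F : C, w.pure 0 F → ∀ n : ℤ, w.pure (-n) (pH n F)) :
    ∀ F : C, w.pure 0 F →
      ∃ s : Finset ℤ, Nonempty (F ≅ ⨁ (fun n : s => (pH n F)⟦(-(n : ℤ))⟧)) := by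
  intro F hF
  obtain ⟨a, b, Y, ha, hb, htri⟩ := htower F
  have horth : ∀ m n : ℤ, m < n →
      ∀ g : (pH n F)⟦-n⟧ ⟶ ((pH m F)⟦-m⟧)⟦(1 : ℤ)⟧, g = 0 := by
    intro m n hmn
    have hle : w.le (-n + -n) ((pH n F)⟦-n⟧) := WeightStructure.le_shift (hpureH F hF n).1 _
    have hge : w.ge (-m + -m + 1) (((pH m F)⟦-m⟧)⟦(1 : ℤ)⟧) :=
      WeightStructure.ge_shift (WeightStructure.ge_shift (hpureH F hF m).2 _) _
    exact WeightStructure.zero_of_le_of_ge hle hge (by lia)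
  obtain ⟨e⟩ := nonempty_iso_biproduct_of_postnikov_tower (Q := fun n => (pH n F)⟦-n⟧)
    (ha (a - 1) (by lia)) htri horth (max b (a - 1)) (le_max_right _ _)
  exact ⟨_, ⟨(hb _ (le_max_left _ _)).some.symm ≪≫ e⟩⟩
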